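/- arXiv:2106.01988 — 4 statements merged into one kernel-verified Lean document; each statement's English description precedes it below -/
import Mathlib

section
/- Every finite bipartite graph that admits a perfect fractional matching admits a perfect matching. -/
open Finset

/-- A perfect fractional matching of a finite graph `G`: a function `φ` on edges
with values in `[0,1]`, vanishing off `E(G)`, whose sum over the edges incident to
any vertex equals `1`. -/
def IsPerfectFractionalMatching {V : Type*} [Fintype V] [DecidableEq V]
    (G : SimpleGraph V) [DecidableRel G.Adj] (φ : Sym2 V → ℝ) : Prop :=
  (∀ e, 0 ≤ φ e ∧ φ e ≤ 1) ∧ (∀ e ∉ G.edgeFinset, φ e = 0) ∧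
    ∀ v : V, ∑ e ∈ G.edgeFinset.filter (fun e => v ∈ e), φ e = 1

private lemma fin2_cases (x : Fin 2) : x = 0 ∨ x = 1 := by fin_cases x <;> simp

/-- Every finite bipartite graph admitting a perfect fractional matching admits a
perfect matching. -/
theorem stmt_2 {V : Type*} [Fintype V] [DecidableEq V] (G : SimpleGraph V)
    [DecidableRel G.Adj] (hbip : G.Colorable 2)
    (φ : Sym2 V → ℝ) (hφ : IsPerfectFractionalMatching G φ) :
    ∃ M : Finset (Sym2 V), M ⊆ G.edgeFinset ∧
      ∀ v : V, (M.filter (fun e => v ∈ e)).card = 1 := by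
  obtain ⟨c⟩ := hbip
  obtain ⟨hφ0, hφoff, hφsum⟩ := hφ
  set I : V → Finset (Sym2 V) := fun v => G.edgeFinset.filter (fun e => v ∈ e) with hI
  -- an edge containing two distinct vertices is the edge between them, so they are adjacent
  have hadj : ∀ (x y : V) (e : Sym2 V), e ∈ G.edgeFinset → x ∈ e → y ∈ e → x ≠ y →
      G.Adj x y := by
    intro x y e he hx hy hxy
    have : e = s(x, y) := (Sym2.mem_and_mem_iff hxy).mp ⟨hx, hy⟩
    rw [SimpleGraph.mem_edgeFinset, this, SimpleGraph.mem_edgeSet] at he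
    exact he
  -- incidence sets of same-colored vertices are disjoint
  have hdisj : ∀ x y : V, c x = c y → x ≠ y → Disjoint (I x) (I y) := by
    intro x y hc hxy
    rw [Finset.disjoint_left]
    intro e hex hey
    simp only [hI, Finset.mem_filter] at hex hey
    exact c.valid (hadj x y e hex.1 hex.2 hey.2 hxy) hc
  -- every vertex of color 0 maps into color 1 via any edge
  have hother : ∀ (v : V) (e : Sym2 V), e ∈ I v →
      ∃ w, e = s(v, w) ∧ G.Adj v w ∧ e ∈ I w := by
    intro v e he
    simp only [hI, Finset.mem_filter] at he
    obtain ⟨he1, hv⟩ := he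
    refine ⟨Sym2.Mem.other hv, (Sym2.other_spec hv).symm, ?_, ?_⟩
    · have := Sym2.other_spec hv
      rw [SimpleGraph.mem_edgeFinset, ← this] at he1
      exact he1
    · simp only [hI, Finset.mem_filter]
      exact ⟨he1, Sym2.other_mem hv⟩
  -- sum of φ over disjoint union of incidence sets of same-colored set equals card
  have hsum_eq : ∀ (s : Finset V) (i : Fin 2), (∀ v ∈ s, c v = i) →
      ∑ e ∈ s.biUnion I, φ e = (s.card : ℝ) := by
    intro s i hs
    rw [Finset.sum_biUnion]
    · rw [Finset.sum_congr rfl (fun v hv => hφsum v), Finset.sum_const, nsmul_eq_mul, mul_one]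
    · intro x hx y hy hxy
      exact hdisj x y ((hs x hx).trans (hs y hy).symm) hxy
  set A : Finset V := Finset.univ.filter (fun v => c v = 0) with hA
  set B : Finset V := Finset.univ.filter (fun v => c v = 1) with hB
  have hmemA : ∀ v, v ∈ A ↔ c v = 0 := by intro v; simp [hA]
  have hmemB : ∀ v, v ∈ B ↔ c v = 1 := by intro v; simp [hB]
  -- edges incident to opposite colors
  have hAadj : ∀ {x y : V}, G.Adj x y → c x = 0 → c y = 1 := by
    intro x y hxy hx
    rcases fin2_cases (c y) with h | h
    · exact absurd (hx.trans h.symm) (c.valid hxy)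
    · exact h
  have hBadj : ∀ {x y : V}, G.Adj x y → c x = 1 → c y = 0 := by
    intro x y hxy hx
    rcases fin2_cases (c y) with h | h
    · exact h
    · exact absurd (hx.trans h.symm) (c.valid hxy)
  -- the biUnion of incidence sets over A (resp. B) is the whole edge set
  have hcover : ∀ (i : Fin 2) (s : Finset V), (∀ v, c v = i → v ∈ s) →
      s.biUnion I = G.edgeFinset := by
    intro i s hsv
    apply Finset.Subset.antisymm
    · intro e he
      rw [Finset.mem_biUnion] at he
      obtain ⟨v, _, he⟩ := he
      simp only [hI, Finset.mem_filter] at he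
      exact he.1
    · intro e he
      induction e with
      | h x y =>
        have hxy : G.Adj x y := by rwa [SimpleGraph.mem_edgeFinset, SimpleGraph.mem_edgeSet] at he
        rw [Finset.mem_biUnion]
        rcases fin2_cases i with hi | hi
        · rcases fin2_cases (c x) with h | h
          · exact ⟨x, hsv x (by rw [hi, h]), by simp [hI, he]⟩
          · exact ⟨y, hsv y (by rw [hi, hBadj hxy h]), by simp [hI, he]⟩
        · rcases fin2_cases (c x) with h | h
          · exact ⟨y, hsv y (by rw [hi, hAadj hxy h]), by simp [hI, he]⟩
          · exact ⟨x, hsv x (by rw [hi, h]), by simp [hI, he]⟩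
  -- |A| = |B|
  have hcardAB : A.card = B.card := by
    have h1 : ∑ e ∈ A.biUnion I, φ e = (A.card : ℝ) :=
      hsum_eq A 0 (fun v hv => (hmemA v).mp hv)
    have h2 : ∑ e ∈ B.biUnion I, φ e = (B.card : ℝ) :=
      hsum_eq B 1 (fun v hv => (hmemB v).mp hv)
    rw [hcover 0 A (fun v hv => (hmemA v).mpr hv)] at h1
    rw [hcover 1 B (fun v hv => (hmemB v).mpr hv)] at h2
    exact_mod_cast h1.symm.trans h2
  -- Hall's condition for the neighbor function on A
  set t : ↥A → Finset V := fun a => G.neighborFinset a.1 with ht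
  have hall : ∀ s : Finset ↥A, s.card ≤ (s.biUnion t).card := by
    intro s
    have hcolN : ∀ b ∈ s.biUnion t, c b = 1 := by
      intro b hb
      rw [Finset.mem_biUnion] at hb
      obtain ⟨a, _, hb⟩ := hb
      rw [ht, SimpleGraph.mem_neighborFinset] at hb
      exact hAadj hb ((hmemA a.1).mp a.2)
    have key : (s.card : ℝ) ≤ ((s.biUnion t).card : ℝ) := by
      have e1 : ∑ e ∈ (s.image Subtype.val).biUnion I, φ e
          = ((s.image Subtype.val).card : ℝ) := by
        apply hsum_eq _ 0
        intro v hv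
        rw [Finset.mem_image] at hv
        obtain ⟨a, _, rfl⟩ := hv
        exact (hmemA a.1).mp a.2
      have e2 : ∑ e ∈ (s.biUnion t).biUnion I, φ e = ((s.biUnion t).card : ℝ) :=
        hsum_eq _ 1 hcolN
      have hsub : (s.image Subtype.val).biUnion I ⊆ (s.biUnion t).biUnion I := by
        intro e he
        rw [Finset.mem_biUnion] at he
        obtain ⟨v, hv, he⟩ := he
        rw [Finset.mem_image] at hv
        obtain ⟨a, ha, rfl⟩ := hv
        obtain ⟨w, _, hadjw, hew⟩ := hother a.1 e he
        rw [Finset.mem_biUnion]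
        exact ⟨w, Finset.mem_biUnion.mpr ⟨a, ha, by rwa [ht, SimpleGraph.mem_neighborFinset]⟩,
          hew⟩
      have hscard : (s.image Subtype.val).card = s.card :=
        Finset.card_image_of_injective _ Subtype.val_injective
      calc (s.card : ℝ) = ∑ e ∈ (s.image Subtype.val).biUnion I, φ e := by
            rw [e1, hscard]
        _ ≤ ∑ e ∈ (s.biUnion t).biUnion I, φ e :=
            Finset.sum_le_sum_of_subset_of_nonneg hsub (fun e _ _ => (hφ0 e).1)
        _ = ((s.biUnion t).card : ℝ) := e2
    exact_mod_cast key
  obtain ⟨f, hfinj, hft⟩ := (Finset.all_card_le_biUnion_card_iff_exists_injective t).mp hall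
  have hfadj : ∀ a : ↥A, G.Adj a.1 (f a) := by
    intro a
    have := hft a
    rwa [ht, SimpleGraph.mem_neighborFinset] at this
  have hfB : ∀ a : ↥A, c (f a) = 1 := fun a => hAadj (hfadj a) ((hmemA a.1).mp a.2)
  -- f is a bijection onto B
  set F : ↥A → ↥B := fun a => ⟨f a, (hmemB (f a)).mpr (hfB a)⟩ with hF
  have hFinj : Function.Injective F := by
    intro a b hab
    exact hfinj (congrArg Subtype.val hab)
  have hFsurj : Function.Surjective F := by
    have hc : Fintype.card ↥A = Fintype.card ↥B := by
      rw [Fintype.card_coe, Fintype.card_coe, hcardAB]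
    exact ((Fintype.bijective_iff_injective_and_card F).mpr ⟨hFinj, hc⟩).surjective
  -- the matching
  refine ⟨Finset.univ.image (fun a : ↥A => s(a.1, f a)), ?_, ?_⟩
  · intro e he
    rw [Finset.mem_image] at he
    obtain ⟨a, _, rfl⟩ := he
    rw [SimpleGraph.mem_edgeFinset, SimpleGraph.mem_edgeSet]
    exact hfadj a
  · intro v
    rw [Finset.card_eq_one]
    rcases fin2_cases (c v) with hv | hv
    · -- v has color 0
      set a0 : ↥A := ⟨v, (hmemA v).mpr hv⟩ with ha0
      refine ⟨s(v, f a0), ?_⟩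
      ext e
      simp only [Finset.mem_filter, Finset.mem_image, Finset.mem_univ, true_and,
        Finset.mem_singleton]
      constructor
      · rintro ⟨⟨a, rfl⟩, hve⟩
        rcases Sym2.mem_iff.mp hve with h | h
        · have : a = a0 := Subtype.ext h.symm
          rw [this]
        · exact absurd (h ▸ hv) (by rw [hfB a]; exact one_ne_zero)
      · rintro rfl
        exact ⟨⟨a0, rfl⟩, Sym2.mem_mk_left _ _⟩
    · -- v has color 1
      obtain ⟨a1, ha1⟩ := hFsurj ⟨v, (hmemB v).mpr hv⟩
      have hfa1 : f a1 = v := congrArg Subtype.val ha1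
      refine ⟨s(a1.1, f a1), ?_⟩
      ext e
      simp only [Finset.mem_filter, Finset.mem_image, Finset.mem_univ, true_and,
        Finset.mem_singleton]
      constructor
      · rintro ⟨⟨a, rfl⟩, hve⟩
        rcases Sym2.mem_iff.mp hve with h | h
        · have := (hmemA v).mp (h ▸ a.2)
          rw [hv] at this
          exact absurd this one_ne_zero
        · have : a = a1 := hfinj (by rw [← h, hfa1])
          rw [this]
      · rintro rfl
        rw [hfa1]
        exact ⟨⟨a1, by rw [hfa1]⟩, Sym2.mem_mk_right _ _⟩
end

section
/- Let G be a finite bipartite graph, φ a perfect fractional matching of G, and suppose the support supp(φ) = {e : 0 < φ(e) < 1} contains a cycle C. Then φ is not an extreme point of the perfect fractional matching polytope: there exists ε > 0 such that both φ + ζ and φ − ζ are perfect fractional matchings, where ζ is the alternating ε-circuit on C. -/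
/-!
Going around a cycle the signs of the alternating circuit `ζ` alternate, so the two cycle
edges at each visit of a vertex cancel; at the base vertex they cancel as well because a
closed walk in a bipartite graph has even length. Hence `ζ` has zero sum at every vertex,
and if `|ε|` is at most the distance of `φ` to `{0, 1}` on the cycle, `φ ± ζ` are again
perfect fractional matchings. Their midpoint is `φ` and `ζ ≠ 0`, so `φ` is not extreme.
-/

open Finset

/-- The alternating `ε`-circuit on a cycle `c` (the distinguished edge is the first
edge of `c`): `ε` on even-position edges of `c`, `-ε` on odd-position edges, `0`
elsewhere. -/
noncomputable def altCircuit {V : Type*} [DecidableEq V] {G : SimpleGraph V} {v : V}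
    (c : G.Walk v v) (ε : ℝ) : Sym2 V → ℝ :=
  fun e => if e ∈ c.edges then ε * (-1 : ℝ) ^ (c.edges.idxOf e) else 0

theorem notMem_extremePoints_of_add_mem_of_sub_mem {𝕜 E : Type*} [Ring 𝕜] [LinearOrder 𝕜]
    [IsStrictOrderedRing 𝕜] [Invertible (2 : 𝕜)] [AddCommGroup E] [Module 𝕜 E] {A : Set E}
    {x y : E} (hy : y ≠ 0) (hadd : x + y ∈ A) (hsub : x - y ∈ A) : x ∉ A.extremePoints 𝕜 :=
  fun hx => hy (add_eq_left.mp (hx.2 hadd hsub (mem_openSegment_add_sub x y)))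

theorem Finset.exists_pos_forall_le {α : Type*} (s : Finset α) {f : α → ℝ}
    (hf : ∀ a ∈ s, 0 < f a) : ∃ ε > 0, ∀ a ∈ s, ε ≤ f a := by
  rcases s.eq_empty_or_nonempty with rfl | hs
  · exact ⟨1, one_pos, by simp⟩
  · obtain ⟨a, ha, hmin⟩ := s.exists_min_image f hs
    exact ⟨f a, hf a ha, hmin⟩

namespace SimpleGraph.Walk

variable {V : Type*} [DecidableEq V] {G : SimpleGraph V}

/-- Consecutive edges of a trail share a vertex and carry opposite signs, so the signed
incidence sum at `w` telescopes down to the two ends. -/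
theorem sum_neg_one_pow_idxOf_incident {a b : V} (p : G.Walk a b) (hp : p.edges.Nodup)
    (w : V) :
    ∑ e ∈ p.edges.toFinset, (if w ∈ e then (-1 : ℝ) ^ p.edges.idxOf e else 0) =
      (if w = a then 1 else 0) - (-1) ^ p.length * (if w = b then 1 else 0) := by
  induction p with
  | nil => simp
  | @cons x y z hxy p ih =>
    rw [edges_cons, List.nodup_cons] at hp
    have hshift : ∀ e ∈ p.edges.toFinset,
        (if w ∈ e then (-1 : ℝ) ^ (s(x, y) :: p.edges).idxOf e else 0) =
          -(if w ∈ e then (-1 : ℝ) ^ p.edges.idxOf e else 0) := by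
      intro e he
      have hne : s(x, y) ≠ e := by rintro rfl; exact hp.1 (List.mem_toFinset.mp he)
      rw [List.idxOf_cons_ne _ hne, pow_succ]
      split_ifs <;> ring
    rw [edges_cons, List.toFinset_cons, sum_insert (by simpa using hp.1), List.idxOf_cons_self,
      sum_congr rfl hshift, sum_neg_distrib, ih hp.2, length_cons, pow_succ]
    simp only [Sym2.mem_iff]
    split_ifs <;> grind [hxy.ne]

end SimpleGraph.Walk

section altCircuit

variable {V : Type*} [DecidableEq V] {G : SimpleGraph V} {v : V} (c : G.Walk v v) (ε : ℝ)

theorem altCircuit_of_notMem {e : Sym2 V} (he : e ∉ c.edges) : altCircuit c ε e = 0 :=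
  if_neg he

theorem abs_altCircuit_of_mem {e : Sym2 V} (he : e ∈ c.edges) : |altCircuit c ε e| = |ε| := by
  simp [altCircuit, he, abs_mul]

theorem altCircuit_neg : altCircuit c (-ε) = -altCircuit c ε := by
  funext e
  by_cases he : e ∈ c.edges <;> simp [altCircuit, he]

theorem altCircuit_ne_zero (hc : ¬c.Nil) (hε : ε ≠ 0) : altCircuit c ε ≠ 0 := by
  obtain ⟨e, he⟩ := List.exists_mem_of_ne_nil _ (mt SimpleGraph.Walk.edges_eq_nil.mp hc)
  intro h
  have := abs_altCircuit_of_mem c ε he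
  rw [h, Pi.zero_apply, abs_zero, eq_comm, abs_eq_zero] at this
  exact hε this

theorem sum_incidence_altCircuit [Fintype V] [DecidableRel G.Adj] (hc : c.edges.Nodup)
    (heven : Even c.length) (w : V) :
    ∑ e ∈ G.edgeFinset.filter (fun e => w ∈ e), altCircuit c ε e = 0 := by
  have hsub : c.edges.toFinset ⊆ G.edgeFinset := fun e he =>
    SimpleGraph.mem_edgeFinset.mpr (c.edges_subset_edgeSet (List.mem_toFinset.mp he))
  rw [sum_filter, ← sum_subset hsub fun e _ he =>
    by rw [altCircuit_of_notMem c ε (mt List.mem_toFinset.mpr he), ite_self]]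
  calc ∑ e ∈ c.edges.toFinset, (if w ∈ e then altCircuit c ε e else 0)
      = ε * ∑ e ∈ c.edges.toFinset, (if w ∈ e then (-1 : ℝ) ^ c.edges.idxOf e else 0) := by
        rw [mul_sum]
        refine sum_congr rfl fun e he => ?_
        rw [altCircuit, if_pos (List.mem_toFinset.mp he)]
        split_ifs <;> ring
    _ = 0 := by
        rw [c.sum_neg_one_pow_idxOf_incident hc, heven.neg_one_pow]
        split_ifs <;> ring

end altCircuit

theorem IsPerfectFractionalMatching.add_of_abs_le {V : Type*} [Fintype V] [DecidableEq V]
    {G : SimpleGraph V} [DecidableRel G.Adj] {φ ζ : Sym2 V → ℝ}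
    (hφ : IsPerfectFractionalMatching G φ) (hζ : ∀ e, |ζ e| ≤ min (φ e) (1 - φ e))
    (hsum : ∀ w, ∑ e ∈ G.edgeFinset.filter (fun e => w ∈ e), ζ e = 0) :
    IsPerfectFractionalMatching G (φ + ζ) := by
  obtain ⟨hbound, hzero, hone⟩ := hφ
  refine ⟨fun e => ?_, fun e he => ?_, fun w => ?_⟩
  · obtain ⟨hle, hle'⟩ := le_min_iff.mp (hζ e)
    have := abs_le.mp hle
    have := abs_le.mp hle'
    constructor <;> simp only [Pi.add_apply] <;> linarith
  · have := (le_min_iff.mp (hζ e)).1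
    rw [hzero e he, abs_nonpos_iff] at this
    simp [hzero e he, this]
  · rw [Pi.add_def, sum_add_distrib, hone w, hsum w, add_zero]

theorem IsPerfectFractionalMatching.add_altCircuit {V : Type*} [Fintype V] [DecidableEq V]
    {G : SimpleGraph V} [DecidableRel G.Adj] {φ : Sym2 V → ℝ}
    (hφ : IsPerfectFractionalMatching G φ) {v : V} (c : G.Walk v v) (hc : c.edges.Nodup)
    (heven : Even c.length) {ε : ℝ} (hε : ∀ e ∈ c.edges, |ε| ≤ min (φ e) (1 - φ e)) :
    IsPerfectFractionalMatching G (φ + altCircuit c ε) := by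
  refine hφ.add_of_abs_le (fun e => ?_) (sum_incidence_altCircuit c ε hc heven)
  by_cases he : e ∈ c.edges
  · exact abs_altCircuit_of_mem c ε he ▸ hε e he
  · rw [altCircuit_of_notMem c ε he, abs_zero, le_min_iff, sub_nonneg]
    exact hφ.1 e

/-- If the support `{e : 0 < φ e < 1}` of a perfect fractional matching `φ` of a
finite bipartite graph contains a cycle `c`, then `φ` is not an extreme point of the
perfect fractional matching polytope: for some `ε > 0`, both `φ + ζ` and `φ - ζ`
are perfect fractional matchings, where `ζ` is the alternating `ε`-circuit on `c`. -/
theorem stmt_4 {V : Type*} [Fintype V] [DecidableEq V] (G : SimpleGraph V)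
    [DecidableRel G.Adj] (hbip : G.Colorable 2)
    (φ : Sym2 V → ℝ) (hφ : IsPerfectFractionalMatching G φ)
    {v : V} (c : G.Walk v v) (hc : c.IsCycle)
    (hsupp : ∀ e ∈ c.edges, 0 < φ e ∧ φ e < 1) :
    φ ∉ Set.extremePoints ℝ {ψ : Sym2 V → ℝ | IsPerfectFractionalMatching G ψ} ∧
    ∃ ε : ℝ, 0 < ε ∧
      IsPerfectFractionalMatching G (φ + altCircuit c ε) ∧
      IsPerfectFractionalMatching G (φ - altCircuit c ε) := by
  have heven : Even c.length := SimpleGraph.two_colorable_iff_forall_loop_even.mp hbip v c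
  obtain ⟨ε, hε, hεle⟩ := c.edges.toFinset.exists_pos_forall_le
    (f := fun e => min (φ e) (1 - φ e)) fun e he => by
      obtain ⟨hpos, hlt⟩ := hsupp e (List.mem_toFinset.mp he)
      exact lt_min hpos (sub_pos.mpr hlt)
  have hperturb : ∀ δ, |δ| = ε → IsPerfectFractionalMatching G (φ + altCircuit c δ) :=
    fun δ hδ => hφ.add_altCircuit c hc.edges_nodup heven fun e he =>
      hδ ▸ hεle e (List.mem_toFinset.mpr he)
  have hplus := hperturb ε (abs_of_pos hε)
  have hminus : IsPerfectFractionalMatching G (φ - altCircuit c ε) := by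
    rw [sub_eq_add_neg, ← altCircuit_neg]
    exact hperturb (-ε) (by rw [abs_neg, abs_of_pos hε])
  have hζ : altCircuit c ε ≠ 0 := altCircuit_ne_zero c ε hc.not_nil hε.ne'
  exact ⟨notMem_extremePoints_of_add_mem_of_sub_mem hζ hplus hminus, ε, hε, hplus, hminus⟩
end

section
/- Let F be a finite connected regular bipartite graph, and let H be a subset of one class of the bipartition with ∅ ≠ H and H not equal to its whole bipartition class. Then |N(H)| > |H|, i.e., Hall's condition is strict for proper nonempty subsets of one side of a connected regular bipartite graph with equal-sized sides. -/
open Finset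

/-- In a finite connected regular bipartite graph, Hall's condition is strict for
every nonempty proper subset `H` of one side `A` of the bipartition:
`|N(H)| > |H|`. -/
theorem stmt_9 {V : Type*} [Fintype V] [DecidableEq V] (G : SimpleGraph V)
    [DecidableRel G.Adj] (hconn : G.Connected)
    {d : ℕ} (hreg : G.IsRegularOfDegree d)
    (A B : Finset V)
    (hpart : ∀ v : V, (v ∈ A ∧ v ∉ B) ∨ (v ∈ B ∧ v ∉ A))
    (hbipedges : ∀ u v : V, G.Adj u v → (u ∈ A ∧ v ∈ B) ∨ (u ∈ B ∧ v ∈ A))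
    (H : Finset V) (hHA : H ⊆ A) (hne : H.Nonempty) (hprop : H ≠ A) :
    H.card < (Finset.univ.filter (fun v : V => ∃ a ∈ H, G.Adj a v)).card := by
  classical
  set N := Finset.univ.filter (fun v : V => ∃ a ∈ H, G.Adj a v) with hNdef
  by_contra hle
  push_neg at hle
  -- pointwise bound
  have hsub : ∀ v : V, (H.filter (fun a => G.Adj a v)) ⊆ G.neighborFinset v := by
    intro v a ha
    rw [SimpleGraph.mem_neighborFinset]
    exact ((mem_filter.mp ha).2).symm
  have hptle : ∀ v ∈ N, (H.filter (fun a => G.Adj a v)).card ≤ d := by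
    intro v _
    calc (H.filter (fun a => G.Adj a v)).card ≤ (G.neighborFinset v).card :=
          card_le_card (hsub v)
      _ = d := hreg v
  -- double counting: sum over N equals d * |H|
  have hzero : ∀ v ∈ (univ : Finset V), v ∉ N → (H.filter (fun a => G.Adj a v)).card = 0 := by
    intro v _ hv
    rw [card_eq_zero, filter_eq_empty_iff]
    intro a ha hadj
    exact hv (by simp [hNdef]; exact ⟨a, ha, hadj⟩)
  have hsum : ∑ v ∈ N, (H.filter (fun a => G.Adj a v)).card = d * H.card := by
    have h1 : ∑ v ∈ N, (H.filter (fun a => G.Adj a v)).card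
        = ∑ v ∈ (univ : Finset V), (H.filter (fun a => G.Adj a v)).card := by
      refine (Finset.sum_subset (subset_univ N) hzero).symm ▸ rfl
    rw [h1]
    have h2 : ∑ v ∈ (univ : Finset V), (H.filter (fun a => G.Adj a v)).card
        = ∑ a ∈ H, (G.neighborFinset a).card := by
      simp only [Finset.card_filter]
      rw [Finset.sum_comm]
      refine Finset.sum_congr rfl fun a _ => ?_
      rw [SimpleGraph.neighborFinset_eq_filter, Finset.card_filter]
    rw [h2]
    simp [hreg _, mul_comm]
  -- equality forces each term to be d
  have hNle : ∑ v ∈ N, (H.filter (fun a => G.Adj a v)).card ≤ d * N.card := by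
    calc ∑ v ∈ N, (H.filter (fun a => G.Adj a v)).card ≤ ∑ v ∈ N, d :=
          Finset.sum_le_sum hptle
      _ = d * N.card := by rw [Finset.sum_const, smul_eq_mul, mul_comm]
  have heqsum : ∑ v ∈ N, (H.filter (fun a => G.Adj a v)).card = ∑ v ∈ N, d := by
    have : d * N.card ≤ d * H.card := Nat.mul_le_mul_left d hle
    have h3 : ∑ v ∈ N, (H.filter (fun a => G.Adj a v)).card = d * N.card :=
      le_antisymm hNle (by omega)
    rw [h3, Finset.sum_const, smul_eq_mul, mul_comm]
  have hall : ∀ v ∈ N, (H.filter (fun a => G.Adj a v)).card = d := by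
    intro v hv
    exact ((Finset.sum_eq_sum_iff_of_le hptle).mp heqsum v hv)
  -- so neighbors of N are in H
  have hNbr : ∀ v ∈ N, G.neighborFinset v ⊆ H := by
    intro v hv
    have : H.filter (fun a => G.Adj a v) = G.neighborFinset v := by
      apply Finset.eq_of_subset_of_card_le (hsub v)
      rw [hall v hv]; exact le_of_eq (hreg v)
    intro w hw
    rw [← this] at hw
    exact (mem_filter.mp hw).1
  -- closure of H ∪ N under adjacency
  have hclosed : ∀ u w : V, G.Adj u w → u ∈ H ∪ N → w ∈ H ∪ N := by
    intro u w hadj hu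
    rcases Finset.mem_union.mp hu with hu | hu
    · exact Finset.mem_union_right _ (by simp [hNdef]; exact ⟨u, hu, hadj⟩)
    · exact Finset.mem_union_left _
        (hNbr u hu (by rw [SimpleGraph.mem_neighborFinset]; exact hadj))
  -- walks stay in H ∪ N
  have hwalk : ∀ {x y : V} (_ : G.Walk x y), x ∈ H ∪ N → y ∈ H ∪ N := by
    intro x y w
    induction w with
    | nil => exact id
    | cons h p ih => intro hx; exact ih (hclosed _ _ h hx)
  -- take a ∈ A \ H
  obtain ⟨a, haA, haH⟩ := Finset.exists_of_ssubset (hHA.ssubset_of_ne hprop)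
  obtain ⟨h0, hh0⟩ := hne
  obtain ⟨w⟩ := hconn h0 a
  have haS : a ∈ H ∪ N := hwalk w (Finset.mem_union_left _ hh0)
  rcases Finset.mem_union.mp haS with h | h
  · exact haH h
  · -- a ∈ N ⊆ B, but a ∈ A
    simp only [hNdef, mem_filter] at h
    obtain ⟨_, b, hbH, hadj⟩ := h
    have hbA : b ∈ A := hHA hbH
    rcases hbipedges b a hadj with ⟨_, haB⟩ | ⟨hbB, _⟩
    · rcases hpart a with ⟨_, h2⟩ | ⟨_, h2⟩
      · exact h2 haB
      · exact h2 haA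
    · rcases hpart b with ⟨_, h2⟩ | ⟨_, h2⟩
      · exact h2 hbB
      · exact h2 hbA
end

section
/- Let G be the Schreier graph of a free, totally ergodic, probability measure preserving action of Z on a standard probability space (V,ν), with respect to the generating set {+1, −1}. Then G does not admit a measurable perfect matching. -/
/-!
If `A = {x : x is matched to T x}` comes from a perfect matching, then `x ∈ A ↔ T x ∉ A`
almost everywhere. Applying this twice shows that `A` is invariant under `T²`, so by ergodicity
of `T²` it is null or conull. But `Aᶜ` agrees with the translate `T⁻¹ A`, which has the same
measure as `A`; hence `A` and `Aᶜ` would both be null.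
-/

open MeasureTheory Set

section

variable {V : Type*} [MeasurableSpace V] {μ : Measure V} {T : V → V} {A : Set V}

lemma preimage_iterate_two_ae_eq_of_ae_mem_iff_notMem (hT : Measure.QuasiMeasurePreserving T μ μ)
    (h : ∀ᵐ x ∂μ, x ∈ A ↔ T x ∉ A) : T^[2] ⁻¹' A =ᵐ[μ] A := by
  rw [Filter.eventuallyEq_set]
  filter_upwards [h, hT.ae h] with x hx hTx
  simp only [mem_preimage, Function.iterate_succ, Function.iterate_zero, Function.comp_apply,
    Function.id_comp]
  tauto

lemma measure_compl_eq_of_ae_mem_iff_notMem (hT : MeasurePreserving T μ μ)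
    (hA : NullMeasurableSet A μ) (h : ∀ᵐ x ∂μ, x ∈ A ↔ T x ∉ A) : μ Aᶜ = μ A := by
  have hcompl : (Aᶜ : Set V) =ᵐ[μ] T ⁻¹' A := by
    rw [Filter.eventuallyEq_set]
    filter_upwards [h] with x hx
    simp only [mem_compl_iff, mem_preimage]
    tauto
  rw [measure_congr hcompl, hT.measure_preimage hA]

lemma not_ae_eq_empty_or_univ_of_measure_compl_eq [NeZero μ] (h : μ Aᶜ = μ A) :
    ¬(A =ᵐ[μ] (∅ : Set V) ∨ A =ᵐ[μ] univ) := by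
  rw [ae_eq_empty, ae_eq_univ, ← h, or_self]
  intro hAc
  have hA : μ A = 0 := h ▸ hAc
  have : μ univ = 0 :=
    nonpos_iff_eq_zero.mp (by simpa [hA, hAc] using measure_univ_le_add_compl (μ := μ) A)
  exact NeZero.ne μ (Measure.measure_univ_eq_zero.mp this)

theorem MeasureTheory.MeasurePreserving.not_exists_ae_mem_iff_apply_notMem [NeZero μ]
    (hT : MeasurePreserving T μ μ) (hT2 : QuasiErgodic (T^[2]) μ) :
    ¬∃ A : Set V, NullMeasurableSet A μ ∧ ∀ᵐ x ∂μ, (x ∈ A ↔ T x ∉ A) := by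
  rintro ⟨A, hA, h⟩
  exact not_ae_eq_empty_or_univ_of_measure_compl_eq (measure_compl_eq_of_ae_mem_iff_notMem hT hA h)
    (hT2.ae_empty_or_univ₀ hA
      (preimage_iterate_two_ae_eq_of_ae_mem_iff_notMem hT.quasiMeasurePreserving h))

end

theorem stmt_10_general {V : Type*} [MeasurableSpace V] (ν : Measure V)
    [IsProbabilityMeasure ν]
    (T : V → V) (hT : MeasurePreserving T ν ν)
    (herg : ∀ n : ℕ, n ≠ 0 → Ergodic (T^[n]) ν) :
    ¬ ∃ A : Set V, MeasurableSet A ∧ ∀ᵐ x ∂ν, (x ∈ A ↔ T x ∉ A) := by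
  rintro ⟨A, hA, h⟩
  exact hT.not_exists_ae_mem_iff_apply_notMem (herg 2 two_ne_zero).quasiErgodic
    ⟨A, hA.nullMeasurableSet, h⟩

/-- The Schreier graph of a free, totally ergodic, pmp action of `ℤ` on a standard
probability space (generated by the map `T = "+1"`, generators `±1`) admits no
measurable perfect matching. A perfect matching is encoded by the measurable set
`A = {x : x is matched to T x}`; the perfect matching condition is that a.e. vertex
is incident to exactly one matched edge, i.e. `x ∈ A ↔ T x ∉ A` a.e. -/
theorem stmt_10 {V : Type*} [MeasurableSpace V] (ν : Measure V)
    [IsProbabilityMeasure ν]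
    (T : V → V) (hT : MeasurePreserving T ν ν) (hbij : Function.Bijective T)
    (herg : ∀ n : ℕ, n ≠ 0 → Ergodic (T^[n]) ν)
    (hfree : ∀ n : ℕ, n ≠ 0 → ∀ᵐ x ∂ν, T^[n] x ≠ x) :
    ¬ ∃ A : Set V, MeasurableSet A ∧ ∀ᵐ x ∂ν, (x ∈ A ↔ T x ∉ A) :=
  stmt_10_general ν T hT herg
end
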